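/- In the triangular setting, assuming θ < min{α, α̃}, there exist constants K₃ ≥ 1, α₃ > 0 and ε₃ ≥ 0 with ε₃ < α₃ such that ‖W(t,s)P^B(s) + X(t,s)R(s)‖ ≤ K₃ e^{−α₃(t−s)} e^{ε₃ s} for all t ≥ s ≥ 0, where W(t,s) = ∫ₛᵗ X(t,τ)C(τ)Y(τ,s)dτ and R(s) = −∫_s^∞ X(s,τ)(I−P^A(τ))C(τ)P^B(τ)Y(τ,s)dτ − ∫₀^s X(s,τ)P^A(τ)C(τ)(I−P^B(τ))Y(τ,s)dτ. -/

import Mathlib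

open MeasureTheory Filter

noncomputable section

/-- `T` is the evolution operator of the linear system `x' = A(t) x`. -/
def IsEvolution {E : Type*} [NormedAddCommGroup E] [NormedSpace ℝ E]
    (A : ℝ → E →L[ℝ] E) (T : ℝ → ℝ → E →L[ℝ] E) : Prop :=
  (∀ s : ℝ, T s s = ContinuousLinearMap.id ℝ E) ∧
  (∀ t r s : ℝ, (T t r).comp (T r s) = T t s) ∧
  (∀ (s : ℝ) (x : E) (t : ℝ), HasDerivAt (fun r => T r s x) (A t (T t s x)) t)

/-- `(K e^{ε s}, γ)`-nonuniform exponential dichotomy on `[0,∞)` with projections `P`. -/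
def NonuniformED {E : Type*} [NormedAddCommGroup E] [NormedSpace ℝ E]
    (T : ℝ → ℝ → E →L[ℝ] E) (P : ℝ → E →L[ℝ] E) (K ε γ : ℝ) : Prop :=
  1 ≤ K ∧ 0 ≤ ε ∧ ε < γ ∧
  (∀ t : ℝ, 0 ≤ t → (P t).comp (P t) = P t) ∧
  (∀ t s : ℝ, 0 ≤ t → 0 ≤ s → (T t s).comp (P s) = (P t).comp (T t s)) ∧
  (∀ s t : ℝ, 0 ≤ s → s ≤ t →
    ‖(T t s).comp (P s)‖ ≤ K * Real.exp (-γ * (t - s)) * Real.exp (ε * s)) ∧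
  (∀ t s : ℝ, 0 ≤ t → t ≤ s →
    ‖(T t s).comp (ContinuousLinearMap.id ℝ E - P s)‖ ≤ K * Real.exp (-γ * (s - t)) * Real.exp (ε * s))

/-- Nonuniform exponential contraction: dichotomy with `P = I`. -/
def NonuniformContraction {E : Type*} [NormedAddCommGroup E] [NormedSpace ℝ E]
    (T : ℝ → ℝ → E →L[ℝ] E) (K ε γ : ℝ) : Prop :=
  NonuniformED T (fun _ => ContinuousLinearMap.id ℝ E) K ε γ

/-- Half `(M e^{δ s}, ν)`-nonuniform bounded growth on `[0,∞)`. -/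
def HalfNBG {E : Type*} [NormedAddCommGroup E] [NormedSpace ℝ E]
    (T : ℝ → ℝ → E →L[ℝ] E) (M δ ν : ℝ) : Prop :=
  1 ≤ M ∧ 0 ≤ δ ∧ 0 < ν ∧
  ∀ s t : ℝ, 0 ≤ s → s ≤ t → ‖T t s‖ ≤ M * Real.exp (ν * (t - s)) * Real.exp (δ * s)

/-- Nonuniform exponential dichotomy spectrum of the system with evolution operator `T`. -/
def NonuniformSpectrum {E : Type*} [NormedAddCommGroup E] [NormedSpace ℝ E]
    (T : ℝ → ℝ → E →L[ℝ] E) : Set ℝ :=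
  {l : ℝ | ¬ ∃ P K ε γ, NonuniformED (fun t s => Real.exp (-l * (t - s)) • T t s) P K ε γ}

/-- Piecewise continuity: on each compact interval, continuity off a finite set. -/
def PiecewiseContinuous {E : Type*} [TopologicalSpace E] (ω : ℝ → E) : Prop :=
  ∀ a b : ℝ, ∃ s : Finset ℝ, ContinuousOn ω (Set.Icc a b \ ↑s)

/-- Global nonuniform asymptotic stability of the trivial solution of `x' = g(t,x)`. -/
def GloballyNonuniformlyAsymptoticallyStable {E : Type*} [NormedAddCommGroup E]
    [NormedSpace ℝ E] (g : ℝ → E → E) : Prop :=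
  (∀ t₀ : ℝ, 0 ≤ t₀ → ∀ η > (0:ℝ), ∃ δ > (0:ℝ), ∀ x : ℝ → E,
    (∀ t, t₀ ≤ t → HasDerivAt x (g t (x t)) t) → ‖x t₀‖ < δ →
      ∀ t, t₀ ≤ t → ‖x t‖ < η) ∧
  (∀ t₀ : ℝ, 0 ≤ t₀ → ∀ x : ℝ → E,
    (∀ t, t₀ ≤ t → HasDerivAt x (g t (x t)) t) → Tendsto x atTop (nhds 0))

/-- Operator norm with parametrized norm `ND s` on the domain and `NC t` on the codomain. -/
def pNorm {V W : Type*} [NormedAddCommGroup V] [NormedSpace ℝ V]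
    [NormedAddCommGroup W] [NormedSpace ℝ W]
    (ND : ℝ → V → ℝ) (NC : ℝ → W → ℝ) (s t : ℝ) (U : V →L[ℝ] W) : ℝ :=
  sSup {r : ℝ | ∃ x : V, x ≠ 0 ∧ r = NC t (U x) / ND s x}

/-- `N t` is a norm for each `t` (triangle inequality and absolute homogeneity). -/
def IsNormFamily {V : Type*} [NormedAddCommGroup V] [NormedSpace ℝ V]
    (N : ℝ → V → ℝ) : Prop :=
  (∀ t x y, N t (x + y) ≤ N t x + N t y) ∧ ∀ (t : ℝ) (c : ℝ) (x : V), N t (c • x) = |c| * N t x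

/-- The block upper triangular operator `[[A, C], [0, B]]` on `E × F`. -/
def blockUpper {E F : Type*} [NormedAddCommGroup E] [NormedSpace ℝ E]
    [NormedAddCommGroup F] [NormedSpace ℝ F]
    (A : E →L[ℝ] E) (B : F →L[ℝ] F) (C : F →L[ℝ] E) : (E × F) →L[ℝ] (E × F) :=
  ((A.comp (ContinuousLinearMap.fst ℝ E F)) + (C.comp (ContinuousLinearMap.snd ℝ E F))).prod
    (B.comp (ContinuousLinearMap.snd ℝ E F))

/-- Evolution operator of the scalar equation `x' = a(t) x`. -/
def scalarEvol (a : ℝ → ℝ) (t s : ℝ) : ℝ →L[ℝ] ℝ :=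
  Real.exp (∫ τ in s..t, a τ) • (1 : ℝ →L[ℝ] ℝ)


/-- `‖C‖_{τ,∞} = sup_{τ ≥ 0} ‖C(τ)‖_{τ,τ}`. -/
def CSupNorm {E F : Type*} [NormedAddCommGroup E] [NormedSpace ℝ E]
    [NormedAddCommGroup F] [NormedSpace ℝ F]
    (NB : ℝ → F → ℝ) (NA : ℝ → E → ℝ) (C : ℝ → F →L[ℝ] E) : ℝ :=
  sSup ((fun τ => pNorm NB NA τ τ (C τ)) '' Set.Ici (0 : ℝ))

/-- The off-diagonal block `W(t,s) = ∫ₛᵗ X(t,τ)C(τ)Y(τ,s)dτ`. -/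
def Wop {E F : Type*} [NormedAddCommGroup E] [NormedSpace ℝ E]
    [NormedAddCommGroup F] [NormedSpace ℝ F]
    (X : ℝ → ℝ → E →L[ℝ] E) (Y : ℝ → ℝ → F →L[ℝ] F) (C : ℝ → F →L[ℝ] E)
    (t s : ℝ) : F →L[ℝ] E :=
  ∫ τ in s..t, (X t τ).comp ((C τ).comp (Y τ s))

/-- The operator
`R(t) = −∫_t^∞ X(t,τ)(I−P^A(τ))C(τ)P^B(τ)Y(τ,t)dτ − ∫_0^t X(t,τ)P^A(τ)C(τ)(I−P^B(τ))Y(τ,t)dτ`. -/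
def Rop {E F : Type*} [NormedAddCommGroup E] [NormedSpace ℝ E]
    [NormedAddCommGroup F] [NormedSpace ℝ F]
    (X : ℝ → ℝ → E →L[ℝ] E) (Y : ℝ → ℝ → F →L[ℝ] F) (C : ℝ → F →L[ℝ] E)
    (PA : ℝ → E →L[ℝ] E) (PB : ℝ → F →L[ℝ] F) (t : ℝ) : F →L[ℝ] E :=
  -(∫ τ in Set.Ioi t, ((X t τ).comp (ContinuousLinearMap.id ℝ E - PA τ)).comp
      ((C τ).comp ((PB τ).comp (Y τ t)))) -
  ∫ τ in (0:ℝ)..t, ((X t τ).comp (PA τ)).comp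
      ((C τ).comp ((ContinuousLinearMap.id ℝ F - PB τ).comp (Y τ t)))

lemma xexp_le {x c : ℝ} (hx : 0 ≤ x) (hc : 0 < c) :
    x * Real.exp (-(c * x)) ≤ 1 / c := by
  have h1 : c * x ≤ Real.exp (c * x) := by
    have := Real.add_one_le_exp (c * x); linarith
  have hpos : (0:ℝ) < Real.exp (-(c * x)) := Real.exp_pos _
  have h2 : x * (c * Real.exp (-(c * x))) ≤ 1 := by
    calc x * (c * Real.exp (-(c * x))) = (c * x) * Real.exp (-(c * x)) := by ring
      _ ≤ Real.exp (c * x) * Real.exp (-(c * x)) :=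
        mul_le_mul_of_nonneg_right h1 hpos.le
      _ = 1 := by rw [← Real.exp_add]; simp
  rw [le_div_iff₀ hc]
  nlinarith [h2]

lemma pNorm_nonneg_of {V W : Type*} [NormedAddCommGroup V] [NormedSpace ℝ V]
    [NormedAddCommGroup W] [NormedSpace ℝ W]
    (ND : ℝ → V → ℝ) (NC : ℝ → W → ℝ) (s t : ℝ) (U : V →L[ℝ] W)
    (hND : ∀ x, 0 ≤ ND s x) (hNC : ∀ y, 0 ≤ NC t y) :
    0 ≤ pNorm ND NC s t U :=
  Real.sSup_nonneg (by rintro r ⟨x, hx, rfl⟩; exact div_nonneg (hNC _) (hND _))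

lemma apply_le_pNorm {V W : Type*} [NormedAddCommGroup V] [NormedSpace ℝ V]
    [NormedAddCommGroup W] [NormedSpace ℝ W]
    (ND : ℝ → V → ℝ) (NC : ℝ → W → ℝ) (s t : ℝ) (U : V →L[ℝ] W)
    {L₁ Mc : ℝ} (hL₁ : 0 < L₁) (hMc : 0 ≤ Mc)
    (hNDl : ∀ x, L₁ * ‖x‖ ≤ ND s x) (hND0 : ND s 0 = 0)
    (hNCu : ∀ y, NC t y ≤ Mc * ‖y‖) (hNC0 : NC t 0 = 0)
    (x : V) : NC t (U x) ≤ pNorm ND NC s t U * ND s x := by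
  rcases eq_or_ne x 0 with rfl | hx
  · simp [hND0, hNC0]
  · have hxn : (0:ℝ) < ‖x‖ := norm_pos_iff.2 hx
    have hb : 0 < ND s x := lt_of_lt_of_le (by positivity) (hNDl x)
    have hK : 0 ≤ Mc * ‖U‖ / L₁ := by positivity
    have hbdd : BddAbove {r : ℝ | ∃ y : V, y ≠ 0 ∧ r = NC t (U y) / ND s y} := by
      refine ⟨Mc * ‖U‖ / L₁, ?_⟩
      rintro r ⟨y, hy, rfl⟩
      have hyn : (0:ℝ) < ‖y‖ := norm_pos_iff.2 hy
      have hby : 0 < ND s y :=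
        lt_of_lt_of_le (by positivity) (hNDl y)
      rw [div_le_iff₀ hby]
      calc NC t (U y) ≤ Mc * ‖U y‖ := hNCu _
        _ ≤ Mc * (‖U‖ * ‖y‖) := mul_le_mul_of_nonneg_left (U.le_opNorm y) hMc
        _ = (Mc * ‖U‖ / L₁) * (L₁ * ‖y‖) := by field_simp
        _ ≤ (Mc * ‖U‖ / L₁) * ND s y := mul_le_mul_of_nonneg_left (hNDl y) hK
    have hmem : NC t (U x) / ND s x ∈
        {r : ℝ | ∃ y : V, y ≠ 0 ∧ r = NC t (U y) / ND s y} := ⟨x, hx, rfl⟩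
    have h := le_csSup hbdd hmem
    rw [div_le_iff₀ hb] at h
    exact h

lemma integral_exp_decay (t : ℝ) {c : ℝ} (hc : 0 < c) :
    ∫ τ in Set.Ioi t, Real.exp (-(c * (τ - t))) = c⁻¹ := by
  calc ∫ τ in Set.Ioi t, Real.exp (-(c * (τ - t)))
      = ∫ τ in Set.Ioi t, (fun x => Real.exp (-(x - c * t))) (c * τ) := by
        refine setIntegral_congr_fun measurableSet_Ioi fun τ _ => ?_
        simp only
        ring_nf
    _ = c⁻¹ • ∫ x in Set.Ioi (c * t), Real.exp (-(x - c * t)) := by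
        exact integral_comp_mul_left_Ioi (fun x => Real.exp (-(x - c * t))) t hc
    _ = c⁻¹ * (Real.exp (c * t) * ∫ x in Set.Ioi (c * t), Real.exp (-x)) := by
        rw [smul_eq_mul]
        congr 1
        rw [← integral_const_mul]
        refine setIntegral_congr_fun measurableSet_Ioi fun x _ => ?_
        rw [← Real.exp_add]; ring_nf
    _ = c⁻¹ := by rw [integral_exp_neg_Ioi, ← Real.exp_add]; simp

set_option maxHeartbeats 1000000 in
/-- Lemma `Lema-W`: there are constants `K₃ ≥ 1`, `α₃ > 0`, `0 ≤ ε₃ < α₃`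
with `‖W(t,s)P^B(s) + X(t,s)R(s)‖ ≤ K₃ e^{−α₃(t−s)} e^{ε₃ s}` for all `t ≥ s ≥ 0`. -/
theorem W_PB_plus_X_R_estimate {n m : ℕ}
    (A : ℝ → EuclideanSpace ℝ (Fin n) →L[ℝ] EuclideanSpace ℝ (Fin n))
    (B : ℝ → EuclideanSpace ℝ (Fin m) →L[ℝ] EuclideanSpace ℝ (Fin m))
    (C : ℝ → EuclideanSpace ℝ (Fin m) →L[ℝ] EuclideanSpace ℝ (Fin n))
    (X : ℝ → ℝ → EuclideanSpace ℝ (Fin n) →L[ℝ] EuclideanSpace ℝ (Fin n))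
    (Y : ℝ → ℝ → EuclideanSpace ℝ (Fin m) →L[ℝ] EuclideanSpace ℝ (Fin m))
    (hX : IsEvolution A X) (hY : IsEvolution B Y)
    (PA : ℝ → EuclideanSpace ℝ (Fin n) →L[ℝ] EuclideanSpace ℝ (Fin n))
    (PB : ℝ → EuclideanSpace ℝ (Fin m) →L[ℝ] EuclideanSpace ℝ (Fin m))
    (hPA : ∀ t : ℝ, 0 ≤ t → (PA t).comp (PA t) = PA t)
    (hPB : ∀ t : ℝ, 0 ≤ t → (PB t).comp (PB t) = PB t)
    (hPAinv : ∀ t s : ℝ, 0 ≤ t → 0 ≤ s → (X t s).comp (PA s) = (PA t).comp (X t s))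
    (hPBinv : ∀ t s : ℝ, 0 ≤ t → 0 ≤ s → (Y t s).comp (PB s) = (PB t).comp (Y t s))
    (NA : ℝ → EuclideanSpace ℝ (Fin n) → ℝ) (NB : ℝ → EuclideanSpace ℝ (Fin m) → ℝ)
    (hNAfam : IsNormFamily NA) (hNBfam : IsNormFamily NB)
    (L₁ L₂ θ : ℝ) (hL₁ : 0 < L₁) (hL₂ : 1 ≤ L₂) (hθ : 0 ≤ θ)
    (hsandA : ∀ (t : ℝ) (x : EuclideanSpace ℝ (Fin n)), 0 ≤ t →
      L₁ * ‖x‖ ≤ NA t x ∧ NA t x ≤ L₂ * Real.exp (θ * t) * ‖x‖)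
    (hsandB : ∀ (t : ℝ) (y : EuclideanSpace ℝ (Fin m)), 0 ≤ t →
      L₁ * ‖y‖ ≤ NB t y ∧ NB t y ≤ L₂ * Real.exp (θ * t) * ‖y‖)
    (κ κ' α α' : ℝ) (hα : 0 < α) (hα' : 0 < α')
    (hPX1 : ∀ s t : ℝ, 0 ≤ s → s ≤ t →
      pNorm NA NA s t ((X t s).comp (PA s)) ≤ κ * Real.exp (-α * (t - s)))
    (hPX2 : ∀ t s : ℝ, 0 ≤ t → t ≤ s →
      pNorm NA NA s t ((X t s).comp (ContinuousLinearMap.id ℝ _ - PA s)) ≤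
        κ * Real.exp (-α * (s - t)))
    (hPY1 : ∀ s t : ℝ, 0 ≤ s → s ≤ t →
      pNorm NB NB s t ((Y t s).comp (PB s)) ≤ κ' * Real.exp (-α' * (t - s)))
    (hPY2 : ∀ t s : ℝ, 0 ≤ t → t ≤ s →
      pNorm NB NB s t ((Y t s).comp (ContinuousLinearMap.id ℝ _ - PB s)) ≤
        κ' * Real.exp (-α' * (s - t)))
    (hCbdd : BddAbove ((fun τ => pNorm NB NA τ τ (C τ)) '' Set.Ici (0 : ℝ)))
    (hθmin : θ < min α α')
    -- convergence of the integrals involved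
    (hint1 : ∀ t : ℝ, 0 ≤ t → MeasureTheory.IntegrableOn
      (fun τ => ((X t τ).comp (ContinuousLinearMap.id ℝ (EuclideanSpace ℝ (Fin n)) - PA τ)).comp
        ((C τ).comp ((PB τ).comp (Y τ t)))) (Set.Ioi t) MeasureTheory.volume)
    (hint2 : ∀ t : ℝ, 0 ≤ t → IntervalIntegrable
      (fun τ => ((X t τ).comp (PA τ)).comp
        ((C τ).comp ((ContinuousLinearMap.id ℝ _ - PB τ).comp (Y τ t))))
      MeasureTheory.volume 0 t)
    (hint3 : ∀ t s : ℝ, IntervalIntegrable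
      (fun τ => (X t τ).comp ((C τ).comp (Y τ s))) MeasureTheory.volume s t) :
    ∃ K₃ α₃ ε₃ : ℝ, 1 ≤ K₃ ∧ 0 < α₃ ∧ 0 ≤ ε₃ ∧ ε₃ < α₃ ∧
      ∀ s t : ℝ, 0 ≤ s → s ≤ t →
        ‖(Wop X Y C t s).comp (PB s) + (X t s).comp (Rop X Y C PA PB s)‖ ≤
          K₃ * Real.exp (-α₃ * (t - s)) * Real.exp (ε₃ * s) := by
  classical
  have hL₂0 : (0:ℝ) < L₂ := lt_of_lt_of_le one_pos hL₂
  have hNA0 : ∀ u : ℝ, NA u 0 = 0 := fun u => by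
    have := hNAfam.2 u 0 0; simpa using this
  have hNB0 : ∀ u : ℝ, NB u 0 = 0 := fun u => by
    have := hNBfam.2 u 0 0; simpa using this
  have hNAnn : ∀ u : ℝ, 0 ≤ u → ∀ x, 0 ≤ NA u x := fun u hu x =>
    le_trans (by positivity) (hsandA u x hu).1
  have hNBnn : ∀ u : ℝ, 0 ≤ u → ∀ y, 0 ≤ NB u y := fun u hu y =>
    le_trans (by positivity) (hsandB u y hu).1
  have hκ0 : 0 ≤ κ := by
    have h := hPX1 0 0 le_rfl le_rfl
    have h0 := pNorm_nonneg_of NA NA 0 0 ((X 0 0).comp (PA 0)) (hNAnn 0 le_rfl) (hNAnn 0 le_rfl)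
    simpa using h0.trans h
  have hκ'0 : 0 ≤ κ' := by
    have h := hPY1 0 0 le_rfl le_rfl
    have h0 := pNorm_nonneg_of NB NB 0 0 ((Y 0 0).comp (PB 0)) (hNBnn 0 le_rfl) (hNBnn 0 le_rfl)
    simpa using h0.trans h
  set Cn := CSupNorm NB NA C with hCndef
  have hCn_le : ∀ τ : ℝ, 0 ≤ τ → pNorm NB NA τ τ (C τ) ≤ Cn :=
    fun τ hτ => le_csSup hCbdd ⟨τ, hτ, rfl⟩
  have hCn0 : 0 ≤ Cn := Real.sSup_nonneg (by
    rintro r ⟨τ, hτ, rfl⟩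
    exact pNorm_nonneg_of NB NA τ τ (C τ) (hNBnn τ hτ) (hNAnn τ hτ))
  set β := min α α' with hβdef
  have hβα : β ≤ α := by rw [hβdef]; exact min_le_left _ _
  have hβα' : β ≤ α' := by rw [hβdef]; exact min_le_right _ _
  have hβ0 : 0 < β := by rw [hβdef]; exact lt_min hα hα'
  have hθβ : θ < β := hθmin
  set α₃ := (θ + β) / 2 with hα₃def
  set ε₃ := (θ + α₃) / 2 with hε₃def
  have hα₃pos : 0 < α₃ := by rw [hα₃def]; linarith
  have hθα₃ : θ < α₃ := by rw [hα₃def]; linarith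
  have hα₃β : α₃ < β := by rw [hα₃def]; linarith
  have hε₃θ : θ < ε₃ := by rw [hε₃def]; linarith
  have hε₃α₃ : ε₃ < α₃ := by rw [hε₃def]; linarith
  have hε₃0 : 0 ≤ ε₃ := le_of_lt (lt_of_le_of_lt hθ hε₃θ)
  set E0 := L₂ / L₁ * Cn with hE0def
  have hE00 : 0 ≤ E0 := by
    rw [hE0def]; exact mul_nonneg (by positivity) hCn0
  set P := E0 * (κ * κ') with hPdef
  have hP0 : 0 ≤ P := by rw [hPdef]; exact mul_nonneg hE00 (mul_nonneg hκ0 hκ'0)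
  set K₃ := max 1 (P * (1/(β - α₃) + 1/(α + α') + 1/(ε₃ - θ))) with hK₃def
  refine ⟨K₃, α₃, ε₃, le_max_left _ _, hα₃pos, hε₃0, hε₃α₃, ?_⟩
  intro s t hs0 hst
  have ht0 : 0 ≤ t := le_trans hs0 hst
  have hx0 : 0 ≤ t - s := by linarith
  -- pointwise seminorm estimates
  have applyA : ∀ a b : ℝ, 0 ≤ a → 0 ≤ b →
      ∀ (U : EuclideanSpace ℝ (Fin n) →L[ℝ] EuclideanSpace ℝ (Fin n))
        (x : EuclideanSpace ℝ (Fin n)),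
      NA b (U x) ≤ pNorm NA NA a b U * NA a x := fun a b ha hb U x =>
    apply_le_pNorm NA NA a b U (Mc := L₂ * Real.exp (θ * b)) hL₁ (by positivity)
      (fun z => (hsandA a z ha).1) (hNA0 a) (fun z => (hsandA b z hb).2) (hNA0 b) x
  have applyB : ∀ a b : ℝ, 0 ≤ a → 0 ≤ b →
      ∀ (U : EuclideanSpace ℝ (Fin m) →L[ℝ] EuclideanSpace ℝ (Fin m))
        (x : EuclideanSpace ℝ (Fin m)),
      NB b (U x) ≤ pNorm NB NB a b U * NB a x := fun a b ha hb U x =>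
    apply_le_pNorm NB NB a b U (Mc := L₂ * Real.exp (θ * b)) hL₁ (by positivity)
      (fun z => (hsandB a z ha).1) (hNB0 a) (fun z => (hsandB b z hb).2) (hNB0 b) x
  have applyC : ∀ a : ℝ, 0 ≤ a → ∀ (y : EuclideanSpace ℝ (Fin m)),
      NA a ((C a) y) ≤ pNorm NB NA a a (C a) * NB a y := fun a ha y =>
    apply_le_pNorm NB NA a a (C a) (Mc := L₂ * Real.exp (θ * a)) hL₁ (by positivity)
      (fun z => (hsandB a z ha).1) (hNB0 a) (fun z => (hsandA a z ha).2) (hNA0 a) y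
  -- key norm estimate for triple compositions
  have key : ∀ (a : ℝ) (U : EuclideanSpace ℝ (Fin n) →L[ℝ] EuclideanSpace ℝ (Fin n))
      (Wo : EuclideanSpace ℝ (Fin m) →L[ℝ] EuclideanSpace ℝ (Fin m)) (c1 c3 : ℝ),
      0 ≤ a → 0 ≤ c1 → 0 ≤ c3 →
      pNorm NA NA a t U ≤ c1 → pNorm NB NB s a Wo ≤ c3 →
      ‖U.comp ((C a).comp Wo)‖ ≤ E0 * Real.exp (θ * s) * (c1 * c3) := by
    intro a U Wo c1 c3 ha hc1 hc3 hU hW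
    have hM : 0 ≤ E0 * Real.exp (θ * s) * (c1 * c3) :=
      mul_nonneg (mul_nonneg hE00 (Real.exp_pos _).le) (mul_nonneg hc1 hc3)
    refine ContinuousLinearMap.opNorm_le_bound _ hM fun y => ?_
    have hz1 : NA t (U ((C a) (Wo y))) ≤ c1 * NA a ((C a) (Wo y)) :=
      (applyA a t ha ht0 U _).trans (mul_le_mul_of_nonneg_right hU (hNAnn a ha _))
    have hz2 : NA a ((C a) (Wo y)) ≤ Cn * NB a (Wo y) :=
      (applyC a ha _).trans (mul_le_mul_of_nonneg_right (hCn_le a ha) (hNBnn a ha _))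
    have hz3 : NB a (Wo y) ≤ c3 * NB s y :=
      (applyB s a hs0 ha Wo y).trans (mul_le_mul_of_nonneg_right hW (hNBnn s hs0 y))
    have hz4 : NB s y ≤ L₂ * Real.exp (θ * s) * ‖y‖ := (hsandB s y hs0).2
    have hchain : NA t (U ((C a) (Wo y))) ≤
        c1 * (Cn * (c3 * (L₂ * Real.exp (θ * s) * ‖y‖))) := by
      refine hz1.trans (mul_le_mul_of_nonneg_left ?_ hc1)
      refine hz2.trans (mul_le_mul_of_nonneg_left ?_ hCn0)
      exact hz3.trans (mul_le_mul_of_nonneg_left hz4 hc3)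
    have hnorm : L₁ * ‖(U.comp ((C a).comp Wo)) y‖ ≤ NA t (U ((C a) (Wo y))) := by
      have := (hsandA t ((U.comp ((C a).comp Wo)) y) ht0).1
      simpa [ContinuousLinearMap.comp_apply] using this
    have hfin := hnorm.trans hchain
    calc ‖(U.comp ((C a).comp Wo)) y‖
        ≤ (c1 * (Cn * (c3 * (L₂ * Real.exp (θ * s) * ‖y‖)))) / L₁ := by
          rw [le_div_iff₀ hL₁]; linarith
      _ = E0 * Real.exp (θ * s) * (c1 * c3) * ‖y‖ := by rw [hE0def]; ring
  -- the three integrands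
  set g1 : ℝ → EuclideanSpace ℝ (Fin m) →L[ℝ] EuclideanSpace ℝ (Fin n) :=
    fun τ => ((X t τ).comp (PA τ)).comp ((C τ).comp ((PB τ).comp (Y τ s))) with hg1def
  set g2 : ℝ → EuclideanSpace ℝ (Fin m) →L[ℝ] EuclideanSpace ℝ (Fin n) :=
    fun τ => ((X t τ).comp (ContinuousLinearMap.id ℝ _ - PA τ)).comp
      ((C τ).comp ((PB τ).comp (Y τ s))) with hg2def
  set g3 : ℝ → EuclideanSpace ℝ (Fin m) →L[ℝ] EuclideanSpace ℝ (Fin n) :=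
    fun τ => ((X t τ).comp (PA τ)).comp
      ((C τ).comp ((ContinuousLinearMap.id ℝ _ - PB τ).comp (Y τ s))) with hg3def
  set f2 : ℝ → EuclideanSpace ℝ (Fin m) →L[ℝ] EuclideanSpace ℝ (Fin n) :=
    fun τ => ((X s τ).comp (ContinuousLinearMap.id ℝ _ - PA τ)).comp
      ((C τ).comp ((PB τ).comp (Y τ s))) with hf2def
  set f3 : ℝ → EuclideanSpace ℝ (Fin m) →L[ℝ] EuclideanSpace ℝ (Fin n) :=
    fun τ => ((X s τ).comp (PA τ)).comp
      ((C τ).comp ((ContinuousLinearMap.id ℝ _ - PB τ).comp (Y τ s))) with hf3def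
  -- post-composition with X t s as a continuous linear map
  set Lc := ContinuousLinearMap.compL ℝ (EuclideanSpace ℝ (Fin m))
    (EuclideanSpace ℝ (Fin n)) (EuclideanSpace ℝ (Fin n)) (X t s) with hLcdef
  have hLc_apply : ∀ U, Lc U = (X t s).comp U := fun U => by
    rw [hLcdef]; simp only [ContinuousLinearMap.compL_apply]
  set Lp := (ContinuousLinearMap.compL ℝ (EuclideanSpace ℝ (Fin m))
    (EuclideanSpace ℝ (Fin m)) (EuclideanSpace ℝ (Fin n))).flip (PB s) with hLpdef
  have hLp_apply : ∀ U, Lp U = U.comp (PB s) := fun U => by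
    rw [hLpdef]; simp only [ContinuousLinearMap.flip_apply, ContinuousLinearMap.compL_apply]
  have hXtr : ∀ τ : ℝ, (X t s).comp (X s τ) = X t τ := fun τ => hX.2.1 t s τ
  have hXtr' : ∀ (τ : ℝ) (z : EuclideanSpace ℝ (Fin n)),
      (X t s) ((X s τ) z) = (X t τ) z := fun τ z => by
    have := DFunLike.congr_fun (hXtr τ) z; simpa using this
  have hcomp2 : ∀ τ : ℝ, Lc (f2 τ) = g2 τ := by
    intro τ
    rw [hLc_apply, hf2def, hg2def]
    refine ContinuousLinearMap.ext fun y => ?_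
    simp only [ContinuousLinearMap.comp_apply]
    rw [hXtr']
  have hcomp3 : ∀ τ : ℝ, Lc (f3 τ) = g3 τ := by
    intro τ
    rw [hLc_apply, hf3def, hg3def]
    refine ContinuousLinearMap.ext fun y => ?_
    simp only [ContinuousLinearMap.comp_apply]
    rw [hXtr']
  have hf2int : IntegrableOn f2 (Set.Ioi s) volume := by
    rw [hf2def]; exact hint1 s hs0
  have hf3int : IntervalIntegrable f3 volume 0 s := by
    rw [hf3def]; exact hint2 s hs0
  have hg2int : IntegrableOn g2 (Set.Ioi s) volume :=
    (Lc.integrable_comp hf2int).congr (ae_of_all _ fun τ => hcomp2 τ)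
  have hsplit2 : ∫ τ in Set.Ioi s, g2 τ = (∫ τ in s..t, g2 τ) + ∫ τ in Set.Ioi t, g2 τ := by
    rw [intervalIntegral.integral_of_le hst,
      ← setIntegral_union (Set.Ioc_disjoint_Ioi le_rfl) measurableSet_Ioi
        (hg2int.mono_set Set.Ioc_subset_Ioi_self) (hg2int.mono_set (Set.Ioi_subset_Ioi hst)),
      Set.Ioc_union_Ioi_eq_Ioi hst]
  have hXR : (X t s).comp (Rop X Y C PA PB s) =
      -((∫ τ in s..t, g2 τ) + ∫ τ in Set.Ioi t, g2 τ) - ∫ τ in (0:ℝ)..s, g3 τ := by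
    have e2 : Lc (∫ τ in Set.Ioi s, f2 τ) = ∫ τ in Set.Ioi s, g2 τ := by
      rw [← ContinuousLinearMap.integral_comp_comm Lc hf2int]
      exact setIntegral_congr_fun measurableSet_Ioi fun τ _ => hcomp2 τ
    have e3 : Lc (∫ τ in (0:ℝ)..s, f3 τ) = ∫ τ in (0:ℝ)..s, g3 τ := by
      rw [← ContinuousLinearMap.intervalIntegral_comp_comm Lc hf3int]
      exact intervalIntegral.integral_congr fun τ _ => hcomp3 τ
    have hR : Rop X Y C PA PB s =
        -(∫ τ in Set.Ioi s, f2 τ) - ∫ τ in (0:ℝ)..s, f3 τ := by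
      rw [Rop, hf2def, hf3def]
    calc (X t s).comp (Rop X Y C PA PB s) = Lc (Rop X Y C PA PB s) := (hLc_apply _).symm
      _ = Lc (-(∫ τ in Set.Ioi s, f2 τ) - ∫ τ in (0:ℝ)..s, f3 τ) := by rw [hR]
      _ = -(Lc (∫ τ in Set.Ioi s, f2 τ)) - Lc (∫ τ in (0:ℝ)..s, f3 τ) := by
          rw [map_sub, map_neg]
      _ = -((∫ τ in s..t, g2 τ) + ∫ τ in Set.Ioi t, g2 τ) - ∫ τ in (0:ℝ)..s, g3 τ := by
          rw [e2, e3, hsplit2]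
  -- the W ∘ PB part
  have hpt : ∀ τ : ℝ, 0 ≤ τ →
      ((X t τ).comp ((C τ).comp (Y τ s))).comp (PB s) = g1 τ + g2 τ := by
    intro τ hτ
    have hinv := hPBinv τ s hτ hs0
    rw [hg1def, hg2def]
    simp only
    refine ContinuousLinearMap.ext fun y => ?_
    have hy : (Y τ s) ((PB s) y) = (PB τ) ((Y τ s) y) := by
      have := DFunLike.congr_fun hinv y
      simpa using this
    simp only [ContinuousLinearMap.comp_apply, ContinuousLinearMap.add_apply,
      ContinuousLinearMap.sub_apply, ContinuousLinearMap.id_apply, map_sub, hy]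
    abel
  have hg2ii : IntervalIntegrable g2 volume s t :=
    (intervalIntegrable_iff_integrableOn_Ioc_of_le hst).2
      (hg2int.mono_set Set.Ioc_subset_Ioi_self)
  have hwPBon : IntegrableOn
      (fun τ => ((X t τ).comp ((C τ).comp (Y τ s))).comp (PB s)) (Set.Ioc s t) volume := by
    have h := (intervalIntegrable_iff_integrableOn_Ioc_of_le hst).1 (hint3 t s)
    have h2 := Lp.integrable_comp h
    exact h2.congr (ae_of_all _ fun τ => hLp_apply _)
  have hg1on : IntegrableOn g1 (Set.Ioc s t) volume := by
    refine MeasureTheory.IntegrableOn.congr_fun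
      (hwPBon.sub (hg2int.mono_set Set.Ioc_subset_Ioi_self)) (fun τ hτ => ?_) measurableSet_Ioc
    have hτ0 : 0 ≤ τ := le_trans hs0 (le_of_lt hτ.1)
    simp only [Pi.sub_apply]
    rw [hpt τ hτ0]; abel
  have hg1ii : IntervalIntegrable g1 volume s t :=
    (intervalIntegrable_iff_integrableOn_Ioc_of_le hst).2 hg1on
  have hWPB : (Wop X Y C t s).comp (PB s) = (∫ τ in s..t, g1 τ) + ∫ τ in s..t, g2 τ := by
    have e0 : (Wop X Y C t s).comp (PB s) =
        ∫ τ in s..t, ((X t τ).comp ((C τ).comp (Y τ s))).comp (PB s) := by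
      calc (Wop X Y C t s).comp (PB s)
          = Lp (∫ τ in s..t, (X t τ).comp ((C τ).comp (Y τ s))) := by
            rw [hLp_apply, Wop]
        _ = ∫ τ in s..t, Lp ((X t τ).comp ((C τ).comp (Y τ s))) :=
            (ContinuousLinearMap.intervalIntegral_comp_comm Lp (hint3 t s)).symm
        _ = ∫ τ in s..t, ((X t τ).comp ((C τ).comp (Y τ s))).comp (PB s) := by
            exact intervalIntegral.integral_congr fun τ _ => hLp_apply _
    rw [e0]
    rw [intervalIntegral.integral_congr (g := fun τ => g1 τ + g2 τ) (fun τ hτ => by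
      have hτ0 : 0 ≤ τ := by
        rw [Set.uIcc_of_le hst] at hτ
        exact le_trans hs0 hτ.1
      exact hpt τ hτ0)]
    exact intervalIntegral.integral_add hg1ii hg2ii
  have hZ : (Wop X Y C t s).comp (PB s) + (X t s).comp (Rop X Y C PA PB s) =
      (∫ τ in s..t, g1 τ) - (∫ τ in Set.Ioi t, g2 τ) - ∫ τ in (0:ℝ)..s, g3 τ := by
    rw [hWPB, hXR]; abel
  rw [hZ]
  -- estimate each of the three pieces
  have hb1 : ∀ τ ∈ Set.uIoc s t, ‖g1 τ‖ ≤
      E0 * Real.exp (θ * s) * ((κ * κ') * Real.exp (-(β * (t - s)))) := by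
    rw [Set.uIoc_of_le hst]
    rintro τ ⟨h1, h2⟩
    have hτ0 : 0 ≤ τ := le_trans hs0 h1.le
    have hk := key τ ((X t τ).comp (PA τ)) ((PB τ).comp (Y τ s))
      (κ * Real.exp (-α * (t - τ))) (κ' * Real.exp (-α' * (τ - s)))
      hτ0 (mul_nonneg hκ0 (Real.exp_pos _).le) (mul_nonneg hκ'0 (Real.exp_pos _).le)
      (hPX1 τ t hτ0 h2)
      (by rw [← hPBinv τ s hτ0 hs0]; exact hPY1 s τ hs0 h1.le)
    have hee : Real.exp (-α * (t - τ)) * Real.exp (-α' * (τ - s)) ≤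
        Real.exp (-(β * (t - s))) := by
      rw [← Real.exp_add]
      apply Real.exp_le_exp.2
      have p1 : 0 ≤ (α - β) * (t - τ) := mul_nonneg (by linarith) (by linarith)
      have p2 : 0 ≤ (α' - β) * (τ - s) := mul_nonneg (by linarith) (by linarith [h1.le])
      linarith [p1, p2]
    rw [hg1def]
    calc ‖((X t τ).comp (PA τ)).comp ((C τ).comp ((PB τ).comp (Y τ s)))‖
        ≤ E0 * Real.exp (θ * s) *
          ((κ * Real.exp (-α * (t - τ))) * (κ' * Real.exp (-α' * (τ - s)))) := hk
      _ = E0 * Real.exp (θ * s) * (κ * κ') *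
          (Real.exp (-α * (t - τ)) * Real.exp (-α' * (τ - s))) := by ring
      _ ≤ E0 * Real.exp (θ * s) * (κ * κ') * Real.exp (-(β * (t - s))) := by
          exact mul_le_mul_of_nonneg_left hee
            (mul_nonneg (mul_nonneg hE00 (Real.exp_pos _).le) (mul_nonneg hκ0 hκ'0))
      _ = E0 * Real.exp (θ * s) * ((κ * κ') * Real.exp (-(β * (t - s)))) := by ring
  have hT1 : ‖∫ τ in s..t, g1 τ‖ ≤
      E0 * Real.exp (θ * s) * ((κ * κ') * Real.exp (-(β * (t - s)))) * (t - s) := by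
    have h := intervalIntegral.norm_integral_le_of_norm_le_const hb1
    rwa [abs_of_nonneg hx0] at h
  -- piece 3
  have hb3 : ∀ τ ∈ Set.uIoc 0 s, ‖g3 τ‖ ≤
      E0 * Real.exp (θ * s) * ((κ * κ') * Real.exp (-(α * (t - s)))) := by
    rw [Set.uIoc_of_le hs0]
    rintro τ ⟨h1, h2⟩
    have hτ0 : 0 ≤ τ := h1.le
    have hWo : (ContinuousLinearMap.id ℝ (EuclideanSpace ℝ (Fin m)) - PB τ).comp (Y τ s) =
        (Y τ s).comp (ContinuousLinearMap.id ℝ (EuclideanSpace ℝ (Fin m)) - PB s) := by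
      rw [ContinuousLinearMap.sub_comp, ContinuousLinearMap.comp_sub,
        ContinuousLinearMap.id_comp, ContinuousLinearMap.comp_id, hPBinv τ s hτ0 hs0]
    have hk := key τ ((X t τ).comp (PA τ))
      ((Y τ s).comp (ContinuousLinearMap.id ℝ (EuclideanSpace ℝ (Fin m)) - PB s))
      (κ * Real.exp (-α * (t - τ))) (κ' * Real.exp (-α' * (s - τ)))
      hτ0 (mul_nonneg hκ0 (Real.exp_pos _).le) (mul_nonneg hκ'0 (Real.exp_pos _).le)
      (hPX1 τ t hτ0 (le_trans h2 hst))
      (hPY2 τ s hτ0 h2)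
    have hee : Real.exp (-α * (t - τ)) * Real.exp (-α' * (s - τ)) ≤
        Real.exp (-(α * (t - s))) := by
      rw [← Real.exp_add]
      apply Real.exp_le_exp.2
      have p1 : 0 ≤ α * (s - τ) := mul_nonneg hα.le (by linarith)
      have p2 : 0 ≤ α' * (s - τ) := mul_nonneg hα'.le (by linarith)
      linarith [p1, p2]
    rw [hg3def]
    simp only
    rw [hWo]
    calc ‖((X t τ).comp (PA τ)).comp ((C τ).comp
          ((Y τ s).comp (ContinuousLinearMap.id ℝ (EuclideanSpace ℝ (Fin m)) - PB s)))‖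
        ≤ E0 * Real.exp (θ * s) *
          ((κ * Real.exp (-α * (t - τ))) * (κ' * Real.exp (-α' * (s - τ)))) := hk
      _ = E0 * Real.exp (θ * s) * (κ * κ') *
          (Real.exp (-α * (t - τ)) * Real.exp (-α' * (s - τ))) := by ring
      _ ≤ E0 * Real.exp (θ * s) * (κ * κ') * Real.exp (-(α * (t - s))) := by
          exact mul_le_mul_of_nonneg_left hee
            (mul_nonneg (mul_nonneg hE00 (Real.exp_pos _).le) (mul_nonneg hκ0 hκ'0))
      _ = E0 * Real.exp (θ * s) * ((κ * κ') * Real.exp (-(α * (t - s)))) := by ring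
  have hT3 : ‖∫ τ in (0:ℝ)..s, g3 τ‖ ≤
      E0 * Real.exp (θ * s) * ((κ * κ') * Real.exp (-(α * (t - s)))) * s := by
    have h := intervalIntegral.norm_integral_le_of_norm_le_const hb3
    rwa [abs_of_nonneg (by linarith : (0:ℝ) ≤ s - 0), sub_zero] at h
  -- piece 2
  set M2 := E0 * Real.exp (θ * s) * ((κ * κ') * Real.exp (-(α' * (t - s)))) with hM2def
  have hb2 : ∀ τ ∈ Set.Ioi t, ‖g2 τ‖ ≤ M2 * Real.exp (-((α + α') * (τ - t))) := by
    intro τ hτ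
    rw [Set.mem_Ioi] at hτ
    have hτ0 : 0 ≤ τ := le_trans ht0 hτ.le
    have hk := key τ ((X t τ).comp (ContinuousLinearMap.id ℝ (EuclideanSpace ℝ (Fin n)) - PA τ))
      ((Y τ s).comp (PB s))
      (κ * Real.exp (-α * (τ - t))) (κ' * Real.exp (-α' * (τ - s)))
      hτ0 (mul_nonneg hκ0 (Real.exp_pos _).le) (mul_nonneg hκ'0 (Real.exp_pos _).le)
      (hPX2 t τ ht0 hτ.le)
      (hPY1 s τ hs0 (le_trans hst hτ.le))
    have hee : Real.exp (-α * (τ - t)) * Real.exp (-α' * (τ - s)) =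
        Real.exp (-(α' * (t - s))) * Real.exp (-((α + α') * (τ - t))) := by
      rw [← Real.exp_add, ← Real.exp_add]
      congr 1; ring
    rw [hg2def]
    simp only
    rw [← hPBinv τ s hτ0 hs0]
    calc ‖((X t τ).comp (ContinuousLinearMap.id ℝ (EuclideanSpace ℝ (Fin n)) - PA τ)).comp
          ((C τ).comp ((Y τ s).comp (PB s)))‖
        ≤ E0 * Real.exp (θ * s) *
          ((κ * Real.exp (-α * (τ - t))) * (κ' * Real.exp (-α' * (τ - s)))) := hk
      _ = E0 * Real.exp (θ * s) * (κ * κ') *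
          (Real.exp (-α * (τ - t)) * Real.exp (-α' * (τ - s))) := by ring
      _ = M2 * Real.exp (-((α + α') * (τ - t))) := by rw [hee, hM2def]; ring
  have hM20 : 0 ≤ M2 := by
    rw [hM2def]
    exact mul_nonneg (mul_nonneg hE00 (Real.exp_pos _).le)
      (mul_nonneg (mul_nonneg hκ0 hκ'0) (Real.exp_pos _).le)
  have hαα' : (0:ℝ) < α + α' := by linarith
  have hgint2 : IntegrableOn (fun τ => M2 * Real.exp (-((α + α') * (τ - t))))
      (Set.Ioi t) volume := by
    have h0 : IntegrableOn (fun τ : ℝ => Real.exp (-(α + α') * τ)) (Set.Ioi t) volume :=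
      exp_neg_integrableOn_Ioi t hαα'
    refine MeasureTheory.IntegrableOn.congr_fun
      (h0.const_mul (M2 * Real.exp ((α + α') * t))) (fun τ _ => ?_) measurableSet_Ioi
    rw [show -((α + α') * (τ - t)) = (α + α') * t + -(α + α') * τ by ring, Real.exp_add]
    ring
  have hT2 : ‖∫ τ in Set.Ioi t, g2 τ‖ ≤ M2 * (α + α')⁻¹ := by
    have h : ‖∫ τ in Set.Ioi t, g2 τ‖ ≤
        ∫ τ in Set.Ioi t, M2 * Real.exp (-((α + α') * (τ - t))) := by
      refine norm_integral_le_of_norm_le hgint2 ?_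
      exact ae_restrict_of_forall_mem measurableSet_Ioi hb2
    calc ‖∫ τ in Set.Ioi t, g2 τ‖
        ≤ ∫ τ in Set.Ioi t, M2 * Real.exp (-((α + α') * (τ - t))) := h
      _ = M2 * (α + α')⁻¹ := by
          rw [integral_const_mul, integral_exp_decay t hαα']
  -- exponential comparisons
  have hE1 : Real.exp (-(β * (t - s))) * (t - s) ≤
      1 / (β - α₃) * Real.exp (-α₃ * (t - s)) := by
    have hsplitβ : Real.exp (-(β * (t - s))) =
        Real.exp (-α₃ * (t - s)) * Real.exp (-((β - α₃) * (t - s))) := by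
      rw [← Real.exp_add]; congr 1; ring
    rw [hsplitβ]
    have h := xexp_le hx0 (show (0:ℝ) < β - α₃ by linarith)
    calc Real.exp (-α₃ * (t - s)) * Real.exp (-((β - α₃) * (t - s))) * (t - s)
        = Real.exp (-α₃ * (t - s)) * ((t - s) * Real.exp (-((β - α₃) * (t - s)))) := by ring
      _ ≤ Real.exp (-α₃ * (t - s)) * (1 / (β - α₃)) :=
          mul_le_mul_of_nonneg_left h (Real.exp_pos _).le
      _ = 1 / (β - α₃) * Real.exp (-α₃ * (t - s)) := by ring
  have hE2 : Real.exp (-(α' * (t - s))) ≤ Real.exp (-α₃ * (t - s)) := by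
    apply Real.exp_le_exp.2
    linarith [mul_nonneg (show (0:ℝ) ≤ α' - α₃ by linarith) hx0]
  have hE3 : Real.exp (-(α * (t - s))) ≤ Real.exp (-α₃ * (t - s)) := by
    apply Real.exp_le_exp.2
    linarith [mul_nonneg (show (0:ℝ) ≤ α - α₃ by linarith) hx0]
  have hEθ : Real.exp (θ * s) ≤ Real.exp (ε₃ * s) := by
    apply Real.exp_le_exp.2
    linarith [mul_nonneg (show (0:ℝ) ≤ ε₃ - θ by linarith) hs0]
  have hE4 : s * Real.exp (θ * s) ≤ 1 / (ε₃ - θ) * Real.exp (ε₃ * s) := by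
    have h := xexp_le hs0 (show (0:ℝ) < ε₃ - θ by linarith)
    have hsplit : Real.exp (θ * s) = Real.exp (ε₃ * s) * Real.exp (-((ε₃ - θ) * s)) := by
      rw [← Real.exp_add]; congr 1; ring
    calc s * Real.exp (θ * s)
        = Real.exp (ε₃ * s) * (s * Real.exp (-((ε₃ - θ) * s))) := by rw [hsplit]; ring
      _ ≤ Real.exp (ε₃ * s) * (1 / (ε₃ - θ)) :=
          mul_le_mul_of_nonneg_left h (Real.exp_pos _).le
      _ = 1 / (ε₃ - θ) * Real.exp (ε₃ * s) := by ring
  -- put things together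
  have hQ1 : E0 * Real.exp (θ * s) * ((κ * κ') * Real.exp (-(β * (t - s)))) * (t - s) ≤
      P * (1 / (β - α₃)) * Real.exp (-α₃ * (t - s)) * Real.exp (ε₃ * s) := by
    calc E0 * Real.exp (θ * s) * ((κ * κ') * Real.exp (-(β * (t - s)))) * (t - s)
        = P * ((Real.exp (-(β * (t - s))) * (t - s)) * Real.exp (θ * s)) := by
          rw [hPdef]; ring
      _ ≤ P * ((1 / (β - α₃) * Real.exp (-α₃ * (t - s))) * Real.exp (ε₃ * s)) := by
          refine mul_le_mul_of_nonneg_left ?_ hP0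
          exact mul_le_mul hE1 hEθ (Real.exp_pos _).le
            (mul_nonneg (one_div_nonneg.2 (by linarith)) (Real.exp_pos _).le)
      _ = P * (1 / (β - α₃)) * Real.exp (-α₃ * (t - s)) * Real.exp (ε₃ * s) := by ring
  have hQ2 : M2 * (α + α')⁻¹ ≤
      P * (1 / (α + α')) * Real.exp (-α₃ * (t - s)) * Real.exp (ε₃ * s) := by
    calc M2 * (α + α')⁻¹
        = (P * (1 / (α + α'))) * (Real.exp (-(α' * (t - s))) * Real.exp (θ * s)) := by
          rw [hM2def, hPdef]; field_simp
      _ ≤ (P * (1 / (α + α'))) * (Real.exp (-α₃ * (t - s)) * Real.exp (ε₃ * s)) := by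
          refine mul_le_mul_of_nonneg_left ?_
            (mul_nonneg hP0 (one_div_nonneg.2 (by linarith)))
          exact mul_le_mul hE2 hEθ (Real.exp_pos _).le (Real.exp_pos _).le
      _ = P * (1 / (α + α')) * Real.exp (-α₃ * (t - s)) * Real.exp (ε₃ * s) := by ring
  have hQ3 : E0 * Real.exp (θ * s) * ((κ * κ') * Real.exp (-(α * (t - s)))) * s ≤
      P * (1 / (ε₃ - θ)) * Real.exp (-α₃ * (t - s)) * Real.exp (ε₃ * s) := by
    calc E0 * Real.exp (θ * s) * ((κ * κ') * Real.exp (-(α * (t - s)))) * s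
        = P * (Real.exp (-(α * (t - s))) * (s * Real.exp (θ * s))) := by
          rw [hPdef]; ring
      _ ≤ P * (Real.exp (-α₃ * (t - s)) * (1 / (ε₃ - θ) * Real.exp (ε₃ * s))) := by
          refine mul_le_mul_of_nonneg_left ?_ hP0
          exact mul_le_mul hE3 hE4
            (mul_nonneg hs0 (Real.exp_pos _).le) (Real.exp_pos _).le
      _ = P * (1 / (ε₃ - θ)) * Real.exp (-α₃ * (t - s)) * Real.exp (ε₃ * s) := by ring
  have htri : ‖(∫ τ in s..t, g1 τ) - (∫ τ in Set.Ioi t, g2 τ) - ∫ τ in (0:ℝ)..s, g3 τ‖ ≤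
      ‖∫ τ in s..t, g1 τ‖ + ‖∫ τ in Set.Ioi t, g2 τ‖ + ‖∫ τ in (0:ℝ)..s, g3 τ‖ := by
    calc ‖(∫ τ in s..t, g1 τ) - (∫ τ in Set.Ioi t, g2 τ) - ∫ τ in (0:ℝ)..s, g3 τ‖
        ≤ ‖(∫ τ in s..t, g1 τ) - (∫ τ in Set.Ioi t, g2 τ)‖ + ‖∫ τ in (0:ℝ)..s, g3 τ‖ :=
          norm_sub_le _ _
      _ ≤ ‖∫ τ in s..t, g1 τ‖ + ‖∫ τ in Set.Ioi t, g2 τ‖ + ‖∫ τ in (0:ℝ)..s, g3 τ‖ := by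
          have := norm_sub_le (∫ τ in s..t, g1 τ) (∫ τ in Set.Ioi t, g2 τ)
          linarith
  have hcoef : P * (1 / (β - α₃)) + P * (1 / (α + α')) + P * (1 / (ε₃ - θ)) ≤ K₃ := by
    rw [hK₃def]
    refine le_trans (le_of_eq (by ring)) (le_max_right _ _)
  calc ‖(∫ τ in s..t, g1 τ) - (∫ τ in Set.Ioi t, g2 τ) - ∫ τ in (0:ℝ)..s, g3 τ‖
      ≤ ‖∫ τ in s..t, g1 τ‖ + ‖∫ τ in Set.Ioi t, g2 τ‖ + ‖∫ τ in (0:ℝ)..s, g3 τ‖ := htri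
    _ ≤ (P * (1 / (β - α₃)) + P * (1 / (α + α')) + P * (1 / (ε₃ - θ))) *
        Real.exp (-α₃ * (t - s)) * Real.exp (ε₃ * s) := by
        have a1 := hT1.trans hQ1
        have a2 := hT2.trans hQ2
        have a3 := hT3.trans hQ3
        linarith [a1, a2, a3]
    _ ≤ K₃ * Real.exp (-α₃ * (t - s)) * Real.exp (ε₃ * s) := by
        exact mul_le_mul_of_nonneg_right
          (mul_le_mul_of_nonneg_right hcoef (Real.exp_pos _).le) (Real.exp_pos _).le


end
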